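/- arXiv:1405.2268 — 4 statements merged into one kernel-verified Lean document; each statement's English description precedes it below -/
import Mathlib

section
/- Tropical factorization of symmetrized monomials: let k ≤ n, let i₁,…,iₖ be positive integers, and a = min(i₁,…,iₖ). Then for all x ∈ ℝⁿ, a·eₖ(x) + Sym(Σ_{j=1}^{k} (i_j − a)·x_j)(x) = Sym(Σ_{j=1}^{k} i_j·x_j)(x), where eₖ(x) = min over k-subsets S of Σ_{i∈S} xᵢ and Sym(f)(x) = min_{π∈Sₙ} f(x∘π). -/
/-- The k-th elementary symmetric tropical polynomial. -/
noncomputable def tropE {n : ℕ} (k : ℕ) (hk : k ≤ n) (x : Fin n → ℝ) : ℝ :=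
  ((Finset.univ : Finset (Fin n)).powersetCard k).inf'
    (Finset.powersetCard_nonempty.mpr (by simpa using hk)) (fun S => ∑ i ∈ S, x i)

/-- Symmetrization: minimum over all coordinate permutations. -/
noncomputable def tropSym {n : ℕ} (f : (Fin n → ℝ) → ℝ) : (Fin n → ℝ) → ℝ :=
  fun x => (Finset.univ : Finset (Equiv.Perm (Fin n))).inf' Finset.univ_nonempty
    (fun π => f (x ∘ π))


open Finset in

lemma fin_strictMono_le {k n : ℕ} {g : Fin k → Fin n} (hg : StrictMono g) (j : Fin k) :
    (j : ℕ) ≤ (g j : ℕ) := by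
  have h := Finset.card_le_card_of_injOn g
    (fun m hm => by simpa using hg (by simpa using hm)) hg.injective.injOn
    (s := Finset.Iio j) (t := Finset.Iio (g j))
  simpa using h

lemma add_inf'_real {β : Type*} {s : Finset β} (h : s.Nonempty) (c : ℝ) (f : β → ℝ) :
    c + s.inf' h f = s.inf' h (fun b => c + f b) := by
  apply le_antisymm
  · exact Finset.le_inf' _ _ (fun b hb => by have := Finset.inf'_le f hb; linarith)
  · obtain ⟨b, hb, hbe⟩ := Finset.exists_mem_eq_inf' h f
    have := Finset.inf'_le (fun b => c + f b) hb
    rw [hbe]; exact this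

lemma tropSym_comp {n : ℕ} (f : (Fin n → ℝ) → ℝ) (σ : Equiv.Perm (Fin n)) (x : Fin n → ℝ) :
    tropSym f (x ∘ σ) = tropSym f x := by
  unfold tropSym
  apply le_antisymm
  · refine Finset.le_inf' _ _ (fun π _ => ?_)
    have h := Finset.inf'_le (fun π : Equiv.Perm (Fin n) => f ((x ∘ σ) ∘ π))
      (Finset.mem_univ (σ⁻¹ * π))
    refine le_trans h (le_of_eq ?_)
    have : (x ∘ ⇑σ) ∘ ⇑(σ⁻¹ * π) = x ∘ ⇑π := by funext t; simp [Equiv.Perm.mul_apply]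
    rw [this]
  · refine Finset.le_inf' _ _ (fun π _ => ?_)
    have h := Finset.inf'_le (fun π : Equiv.Perm (Fin n) => f (x ∘ π))
      (Finset.mem_univ (σ * π))
    refine le_trans h (le_of_eq ?_)
    have : x ∘ ⇑(σ * π) = (x ∘ ⇑σ) ∘ ⇑π := by funext t; simp [Equiv.Perm.mul_apply]
    rw [this]

lemma tropE_le_comp {n k : ℕ} (hkn : k ≤ n) (x : Fin n → ℝ) (σ : Equiv.Perm (Fin n)) :
    tropE k hkn x ≤ tropE k hkn (x ∘ σ) := by
  unfold tropE
  refine Finset.le_inf' _ _ (fun S hS => ?_)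
  have hS' : (S.image σ) ∈ (Finset.univ : Finset (Fin n)).powersetCard k := by
    rw [Finset.mem_powersetCard]
    exact ⟨Finset.subset_univ _, by
      rw [Finset.card_image_of_injective _ σ.injective,
        (Finset.mem_powersetCard.mp hS).2]⟩
  have h := Finset.inf'_le (fun S => ∑ i ∈ S, x i) hS'
  refine le_trans h (le_of_eq ?_)
  exact Finset.sum_image (fun a _ b _ h => σ.injective h)

lemma tropE_comp {n k : ℕ} (hkn : k ≤ n) (x : Fin n → ℝ) (σ : Equiv.Perm (Fin n)) :
    tropE k hkn (x ∘ σ) = tropE k hkn x := by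
  refine le_antisymm ?_ (tropE_le_comp hkn x σ)
  have h := tropE_le_comp hkn (x ∘ σ) σ⁻¹
  have : (x ∘ σ) ∘ ⇑σ⁻¹ = x := by funext t; simp
  rwa [this] at h

lemma tropE_sorted {n k : ℕ} (hkn : k ≤ n) (y : Fin n → ℝ) (hy : Monotone y) :
    tropE k hkn y = ∑ j : Fin k, y (Fin.castLE hkn j) := by
  apply le_antisymm
  · have hmem : (Finset.univ.map (Fin.castLEEmb hkn)) ∈
        (Finset.univ : Finset (Fin n)).powersetCard k := by
      rw [Finset.mem_powersetCard]
      exact ⟨Finset.subset_univ _, by simp⟩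
    have h := Finset.inf'_le (fun S => ∑ i ∈ S, y i) hmem
    refine le_trans h (le_of_eq ?_)
    rw [Finset.sum_map]
    rfl
  · refine Finset.le_inf' _ _ (fun S hS => ?_)
    have hS' : S.card = k := (Finset.mem_powersetCard.mp hS).2
    have hsum : ∑ i ∈ S, y i = ∑ j : Fin k, y (S.orderEmbOfFin hS' j) := by
      rw [← Finset.sum_coe_sort S y]
      rw [← Equiv.sum_comp (S.orderIsoOfFin hS').toEquiv (fun s : S => y s)]
      refine Finset.sum_congr rfl (fun j _ => ?_)
      simp [Finset.coe_orderIsoOfFin_apply]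
    rw [hsum]
    refine Finset.sum_le_sum (fun j _ => ?_)
    refine hy ?_
    have := fin_strictMono_le (S.orderEmbOfFin hS').strictMono j
    simpa [Fin.le_def] using this

lemma tropSym_sorted {n k : ℕ} (hkn : k ≤ n) (c : Fin k → ℝ) (hc : ∀ j, 0 ≤ c j)
    (y : Fin n → ℝ) (hy : Monotone y) :
    tropSym (fun z => ∑ j : Fin k, c j * z (Fin.castLE hkn j)) y
    = Finset.univ.inf' Finset.univ_nonempty
        (fun τ : Equiv.Perm (Fin k) => ∑ j : Fin k, c j * y (Fin.castLE hkn (τ j))) := by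
  apply le_antisymm
  · refine Finset.le_inf' _ _ (fun τ _ => ?_)
    set π := τ.viaFintypeEmbedding (Fin.castLEEmb hkn) with hπ
    have h := Finset.inf'_le
      (fun π : Equiv.Perm (Fin n) => ∑ j : Fin k, c j * (y ∘ π) (Fin.castLE hkn j))
      (Finset.mem_univ π)
    refine le_trans h (le_of_eq ?_)
    refine Finset.sum_congr rfl (fun j _ => ?_)
    have : π (Fin.castLE hkn j) = Fin.castLE hkn (τ j) := by
      have := Equiv.Perm.viaFintypeEmbedding_apply_image τ (Fin.castLEEmb hkn) j
      simpa [hπ] using this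
    simp [Function.comp, this]
  · refine Finset.le_inf' _ _ (fun π _ => ?_)
    set ι : Fin k → Fin n := fun j => π (Fin.castLE hkn j) with hι
    have hιinj : Function.Injective ι :=
      π.injective.comp (Fin.castLE_injective hkn)
    set T : Finset (Fin n) := Finset.image ι Finset.univ with hT
    have hTcard : T.card = k := by
      rw [hT, Finset.card_image_of_injective _ hιinj]; simp
    have hbij : Function.Bijective (fun j : Fin k => (⟨ι j, by simp [hT]⟩ : T)) := by
      rw [Fintype.bijective_iff_injective_and_card]
      constructor
      · intro a b hab
        exact hιinj (by simpa [Subtype.ext_iff] using hab)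
      · simp [Fintype.card_coe, hTcard]
    set τ : Equiv.Perm (Fin k) :=
      (Equiv.ofBijective _ hbij).trans (T.orderIsoOfFin hTcard).toEquiv.symm with hτ
    have hkey : ∀ j : Fin k, (T.orderEmbOfFin hTcard) (τ j) = ι j := by
      intro j
      have : (T.orderIsoOfFin hTcard) (τ j) = ⟨ι j, by simp [hT]⟩ := by
        simp [hτ]
      rw [← Finset.coe_orderIsoOfFin_apply, this]
    have h := Finset.inf'_le
      (fun τ : Equiv.Perm (Fin k) => ∑ j : Fin k, c j * y (Fin.castLE hkn (τ j)))
      (Finset.mem_univ τ)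
    refine le_trans h ?_
    refine Finset.sum_le_sum (fun j _ => ?_)
    refine mul_le_mul_of_nonneg_left (hy ?_) (hc j)
    rw [Fin.le_def]
    have h1 := fin_strictMono_le (T.orderEmbOfFin hTcard).strictMono (τ j)
    rw [hkey j] at h1
    simpa using h1

/-- Tropical factorization of symmetrized monomials:
a ⊙ eₖᵃ ⊙ Sym(x₁^{i₁-a} ⋯ xₖ^{iₖ-a}) = Sym(x₁^{i₁} ⋯ xₖ^{iₖ}),
where a = min(i₁,…,iₖ). -/
theorem sym_monomial_factor {n k : ℕ} (hkn : k ≤ n) (i : Fin k → ℕ)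
    (hi : ∀ j, 0 < i j) (a : ℕ) (ha : ∀ j, a ≤ i j) (hmem : ∃ j, i j = a)
    (x : Fin n → ℝ) :
    (a : ℝ) * tropE k hkn x
      + tropSym (fun y => ∑ j : Fin k, ((i j : ℝ) - (a : ℝ)) * y (Fin.castLE hkn j)) x
    = tropSym (fun y => ∑ j : Fin k, (i j : ℝ) * y (Fin.castLE hkn j)) x := by
  set σ := Tuple.sort x with hσ
  have hy : Monotone (x ∘ σ) := Tuple.monotone_sort x
  rw [← tropE_comp hkn x σ, ← tropSym_comp _ σ x, ← tropSym_comp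
    (fun y => ∑ j : Fin k, (i j : ℝ) * y (Fin.castLE hkn j)) σ x]
  set y := x ∘ σ
  rw [tropSym_sorted hkn (fun j => (i j : ℝ) - (a : ℝ))
      (fun j => by
        have := ha j
        simp only [sub_nonneg]
        exact_mod_cast this) y hy,
    tropSym_sorted hkn (fun j => (i j : ℝ)) (fun j => by positivity) y hy,
    tropE_sorted hkn y hy]
  rw [add_inf'_real]
  refine Finset.inf'_congr _ rfl (fun τ _ => ?_)
  have hsum : ∑ j : Fin k, y (Fin.castLE hkn (τ j)) = ∑ j : Fin k, y (Fin.castLE hkn j) :=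
    Equiv.sum_comp τ (fun j => y (Fin.castLE hkn j))
  calc (a : ℝ) * ∑ j : Fin k, y (Fin.castLE hkn j)
        + ∑ j : Fin k, ((i j : ℝ) - (a : ℝ)) * y (Fin.castLE hkn (τ j))
      = (a : ℝ) * ∑ j : Fin k, y (Fin.castLE hkn (τ j))
        + ∑ j : Fin k, ((i j : ℝ) - (a : ℝ)) * y (Fin.castLE hkn (τ j)) := by rw [hsum]
    _ = ∑ j : Fin k, (i j : ℝ) * y (Fin.castLE hkn (τ j)) := by
        rw [Finset.mul_sum, ← Finset.sum_add_distrib]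
        exact Finset.sum_congr rfl (fun j _ => by ring)
end

section
/- For any permutations π, ρ ∈ Sₙ, k ≤ n, positive integers i₁,…,iₖ with a = min(i₁,…,iₖ), and all x ∈ ℝⁿ: Σ_{j=1}^k (i_j − a)·x_{π(j)} + Σ_{j=1}^k a·x_{ρ(j)} ≥ min_{σ ∈ Sₙ} Σ_{j=1}^k i_j·x_{σ(j)}. -/
open Finset Equiv

/-- Pigeonhole-style lemma: the `j`-th value of the sorted tuple `x` is at most the
`j`-th value of any sorted injective selection of `k` of the values. -/
lemma sorted_le_aux {n k : ℕ} (hkn : k ≤ n) (x : Fin n → ℝ) (g : Fin k → Fin n)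
    (hg : Function.Injective g) (hmono : Monotone (x ∘ g)) (j : Fin k) :
    x (Tuple.sort x (Fin.castLE hkn j)) ≤ x (g j) := by
  set s := Tuple.sort x with hs
  set T : Finset (Fin n) := (Finset.Iic j).image (fun m => s.symm (g m)) with hT
  have hcard : T.card = (j : ℕ) + 1 := by
    have hinj : Function.Injective (fun m => s.symm (g m)) := s.symm.injective.comp hg
    rw [hT, Finset.card_image_of_injective _ hinj, Fin.card_Iic]
  have hex : ∃ b ∈ T, (j : ℕ) ≤ (b : ℕ) := by
    by_contra hcon
    push_neg at hcon
    have hsub : T ⊆ Finset.Iio (Fin.castLE hkn j) := by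
      intro b hb
      simp only [Finset.mem_Iio]
      exact Fin.lt_def.2 (hcon b hb)
    have := Finset.card_le_card hsub
    rw [hcard, Fin.card_Iio] at this
    simp at this
  obtain ⟨b, hbT, hjb⟩ := hex
  obtain ⟨m, hm, hbm⟩ := Finset.mem_image.1 hbT
  have h1 : x (s (Fin.castLE hkn j)) ≤ x (s b) := by
    exact Tuple.monotone_sort x (Fin.le_def.2 hjb)
  have h2 : x (s b) = x (g m) := by rw [← hbm, Equiv.apply_symm_apply]
  calc x (s (Fin.castLE hkn j)) ≤ x (s b) := h1
    _ = x (g m) := h2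
    _ ≤ x (g j) := hmono (Finset.mem_Iic.1 hm)

/-- Key inequality: for any permutations π, ρ,
Σⱼ (iⱼ − a)·x_{π(j)} + Σⱼ a·x_{ρ(j)} ≥ min over σ ∈ Sₙ of Σⱼ iⱼ·x_{σ(j)}. -/
theorem monomial_ineq {n k : ℕ} (hkn : k ≤ n) (i : Fin k → ℕ)
    (hi : ∀ j, 0 < i j) (a : ℕ) (ha : ∀ j, a ≤ i j) (hmem : ∃ j, i j = a)
    (π ρ : Equiv.Perm (Fin n)) (x : Fin n → ℝ) :
    (Finset.univ : Finset (Equiv.Perm (Fin n))).inf' Finset.univ_nonempty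
      (fun σ => ∑ j : Fin k, (i j : ℝ) * x (σ (Fin.castLE hkn j)))
    ≤ ∑ j : Fin k, ((i j : ℝ) - (a : ℝ)) * x (π (Fin.castLE hkn j))
      + ∑ j : Fin k, (a : ℝ) * x (ρ (Fin.castLE hkn j)) := by
  classical
  set s := Tuple.sort x with hs
  set xs : Fin k → ℝ := fun j => x (s (Fin.castLE hkn j)) with hxs
  -- sorted selections from π and ρ
  set w : Fin k → ℝ := fun j => x (π (Fin.castLE hkn j)) with hw
  set u : Equiv.Perm (Fin k) := Tuple.sort w with hu
  set w' : Fin k → ℝ := fun j => x (ρ (Fin.castLE hkn j)) with hw'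
  set u' : Equiv.Perm (Fin k) := Tuple.sort w' with hu'
  have hg1 : ∀ j : Fin k, xs j ≤ w (u j) := by
    intro j
    exact sorted_le_aux hkn x (fun m => π (Fin.castLE hkn (u m)))
      (π.injective.comp ((Fin.castLE_injective hkn).comp u.injective))
      (Tuple.monotone_sort w) j
  have hg2 : ∀ j : Fin k, xs j ≤ w' (u' j) := by
    intro j
    exact sorted_le_aux hkn x (fun m => ρ (Fin.castLE hkn (u' m)))
      (ρ.injective.comp ((Fin.castLE_injective hkn).comp u'.injective))
      (Tuple.monotone_sort w') j
  -- build the candidate permutation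
  set fe : Fin k ≃ {m : Fin n // (m : ℕ) < k} :=
    { toFun := fun j => ⟨Fin.castLE hkn j, j.2⟩
      invFun := fun m => ⟨(m : Fin n), m.2⟩
      left_inv := fun j => rfl
      right_inv := fun m => rfl } with hfe
  set e : Equiv.Perm (Fin n) := Equiv.Perm.extendDomain u⁻¹ fe with he
  have heapp : ∀ j : Fin k, e (Fin.castLE hkn j) = Fin.castLE hkn (u⁻¹ j) := by
    intro j
    have := Equiv.Perm.extendDomain_apply_subtype u⁻¹ fe (b := Fin.castLE hkn j) j.2
    rw [he, this]
    rfl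
  refine le_trans (Finset.inf'_le _ (Finset.mem_univ (s * e))) ?_
  have hval : ∀ j : Fin k, x ((s * e) (Fin.castLE hkn j)) = xs (u⁻¹ j) := by
    intro j
    rw [Equiv.Perm.mul_apply, heapp]
  have hsplit : ∀ j : Fin k, (i j : ℝ) = ((i j : ℝ) - a) + a := by intro j; ring
  have hca : ∀ j : Fin k, (0:ℝ) ≤ (i j : ℝ) - a := by
    intro j
    have := ha j
    have : (a : ℝ) ≤ (i j : ℝ) := by exact_mod_cast this
    linarith
  calc ∑ j : Fin k, (i j : ℝ) * x ((s * e) (Fin.castLE hkn j))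
      = ∑ j : Fin k, (((i j : ℝ) - a) * xs (u⁻¹ j) + a * xs (u⁻¹ j)) := by
        refine Finset.sum_congr rfl fun j _ => ?_
        rw [hval j]; ring
    _ = ∑ j : Fin k, ((i j : ℝ) - a) * xs (u⁻¹ j) + ∑ j : Fin k, (a:ℝ) * xs (u⁻¹ j) :=
        Finset.sum_add_distrib
    _ ≤ ∑ j : Fin k, ((i j : ℝ) - (a : ℝ)) * x (π (Fin.castLE hkn j))
      + ∑ j : Fin k, (a : ℝ) * x (ρ (Fin.castLE hkn j)) := by
        gcongr ?_ + ?_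
        · -- first sum
          have h1 : ∑ j : Fin k, ((i j : ℝ) - a) * xs (u⁻¹ j)
              = ∑ j : Fin k, ((i (u j) : ℝ) - a) * xs j := by
            rw [← Equiv.sum_comp u (fun j => ((i j : ℝ) - a) * xs (u⁻¹ j))]
            simp
          rw [h1]
          have h2 : ∑ j : Fin k, ((i (u j) : ℝ) - a) * xs j
              ≤ ∑ j : Fin k, ((i (u j) : ℝ) - a) * w (u j) := by
            refine Finset.sum_le_sum fun j _ => ?_
            exact mul_le_mul_of_nonneg_left (hg1 j) (hca (u j))
          refine h2.trans (le_of_eq ?_)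
          rw [← Equiv.sum_comp u (fun j => ((i j : ℝ) - a) * w j)]
        · -- second sum
          have h1 : ∑ j : Fin k, (a:ℝ) * xs (u⁻¹ j) = ∑ j : Fin k, (a:ℝ) * xs j :=
            Equiv.sum_comp u⁻¹ (fun j => (a:ℝ) * xs j)
          rw [h1]
          have h2 : ∑ j : Fin k, (a:ℝ) * xs j ≤ ∑ j : Fin k, (a:ℝ) * w' (u' j) := by
            refine Finset.sum_le_sum fun j _ => ?_
            exact mul_le_mul_of_nonneg_left (hg2 j) (by positivity)
          refine h2.trans (le_of_eq ?_)
          exact Equiv.sum_comp u' (fun j => (a:ℝ) * w' j)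
end

section
/- Every symmetrized tropical monomial with nonnegative integer exponents can be written as a tropical polynomial in the elementary symmetric tropical polynomials: for any nonnegative integers i₁,…,iₙ, there exist finitely many terms, each of the form c + Σ_{k=1}^n m_k·eₖ with m_k ∈ ℕ and c ∈ ℝ, whose pointwise minimum equals the function x ↦ min_{π ∈ Sₙ} Σ_{j=1}^n i_j·x_{π(j)}. -/
open Finset

/-- The elementary symmetric tropical polynomials, indexed by Fin n
(so `tropE' k` is e_{k+1}). -/
noncomputable def tropE' {n : ℕ} (k : Fin n) (x : Fin n → ℝ) : ℝ :=
  tropE ((k : ℕ) + 1) k.isLt x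

/-! ### Auxiliary lemmas -/

/-- Abel summation over `range n`. -/
lemma abel_aux (g y : ℕ → ℝ) : ∀ n : ℕ,
    ∑ k ∈ range n, (g k - g (k + 1)) * (∑ j ∈ range (k + 1), y j)
      = (∑ j ∈ range n, g j * y j) - g n * ∑ j ∈ range n, y j
  | 0 => by simp
  | (n + 1) => by
      rw [sum_range_succ, abel_aux g y n, sum_range_succ (fun j => g j * y j),
        sum_range_succ y n]
      ring

/-- Extension of a `Fin n`-tuple to `ℕ` by zero. -/
noncomputable def extz {n : ℕ} (y : Fin n → ℝ) : ℕ → ℝ :=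
  fun j => if h : j < n then y ⟨j, h⟩ else 0

lemma sum_univ_extz {n : ℕ} (y : Fin n → ℝ) :
    ∑ j ∈ range n, extz y j = ∑ j : Fin n, y j := by
  rw [← Fin.sum_univ_eq_sum_range (fun j => extz y j) n]
  exact Finset.sum_congr rfl (fun j _ => by simp [extz, j.isLt])

lemma sum_Iic_extz {n : ℕ} (y : Fin n → ℝ) (k : Fin n) :
    ∑ j ∈ Finset.Iic k, y j = ∑ j ∈ range ((k : ℕ) + 1), extz y j := by
  have hr : range ((k : ℕ) + 1) = Finset.Iic (k : ℕ) := by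
    ext a; simp [Nat.lt_succ_iff]
  rw [hr, ← Fin.map_valEmbedding_Iic, Finset.sum_map]
  exact Finset.sum_congr rfl (fun j _ => by simp [extz, j.isLt])

lemma strictMono_le_apply' {m n : ℕ} (e : Fin m → Fin n) (he : StrictMono e) :
    ∀ v (hv : v < m), v ≤ (e ⟨v, hv⟩ : ℕ)
  | 0, _ => Nat.zero_le _
  | v + 1, hv => by
      have h' : v < m := Nat.lt_of_succ_lt hv
      have h1 := strictMono_le_apply' e he v h'
      have h2 : (e ⟨v, h'⟩ : ℕ) < (e ⟨v + 1, hv⟩ : ℕ) :=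
        Fin.lt_def.mp (he (by simp [Fin.lt_def]))
      omega

lemma strictMono_le_apply {m n : ℕ} (e : Fin m → Fin n) (he : StrictMono e)
    (a : Fin m) : (a : ℕ) ≤ (e a : ℕ) := by
  have := strictMono_le_apply' e he a a.isLt
  simpa using this

/-- For monotone `w`, the sum of the first `k+1` values is at most the sum of
`w` over any set of cardinality `k+1`. -/
lemma min_sum_le {n : ℕ} (w : Fin n → ℝ) (hw : Monotone w) (k : Fin n)
    (T : Finset (Fin n)) (hT : T.card = (k : ℕ) + 1) :
    ∑ j ∈ Finset.Iic k, w j ≤ ∑ a ∈ T, w a := by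
  set e := T.orderEmbOfFin hT with he
  have hTimg : Finset.image e Finset.univ = T := by
    ext a
    simp only [mem_image, mem_univ, true_and]
    constructor
    · rintro ⟨m, rfl⟩; exact T.orderEmbOfFin_mem hT m
    · intro ha
      have : a ∈ Set.range e := by rw [Finset.range_orderEmbOfFin]; exact ha
      obtain ⟨m, hm⟩ := this
      exact ⟨m, hm⟩
  have hsum : ∑ a ∈ T, w a = ∑ m : Fin ((k : ℕ) + 1), w (e m) := by
    rw [← hTimg, Finset.sum_image (fun a _ b _ h => e.injective h)]
  have hIic : ∑ j ∈ Finset.Iic k, w j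
      = ∑ m : Fin ((k : ℕ) + 1), w (Fin.castLE k.isLt m) := by
    rw [sum_Iic_extz, ← Fin.sum_univ_eq_sum_range (fun m => extz w m) ((k : ℕ) + 1)]
    refine Finset.sum_congr rfl (fun m _ => ?_)
    have hmn : (m : ℕ) < n := lt_of_lt_of_le m.isLt k.isLt
    simp [extz, hmn, Fin.castLE]
  rw [hsum, hIic]
  refine Finset.sum_le_sum (fun m _ => hw ?_)
  rw [Fin.le_def]
  simpa using strictMono_le_apply e e.strictMono m

lemma tropE'_le {n : ℕ} (x : Fin n → ℝ) (k : Fin n) (φ : Fin n → Fin n)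
    (hφ : Function.Injective φ) :
    tropE' k x ≤ ∑ j ∈ Finset.Iic k, x (φ j) := by
  unfold tropE' tropE
  rw [← Finset.sum_image (fun a _ b _ h => hφ h)]
  refine Finset.inf'_le _ ?_
  rw [Finset.mem_powersetCard]
  refine ⟨Finset.subset_univ _, ?_⟩
  rw [Finset.card_image_of_injective _ hφ, Fin.card_Iic]

lemma tropE'_eq_sorted {n : ℕ} (x : Fin n → ℝ) (k : Fin n) :
    tropE' k x = ∑ j ∈ Finset.Iic k, x (Tuple.sort x j) := by
  refine le_antisymm (tropE'_le x k _ (Tuple.sort x).injective) ?_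
  unfold tropE' tropE
  refine Finset.le_inf' _ _ (fun S hS => ?_)
  rw [Finset.mem_powersetCard] at hS
  have hcard : (Finset.image (⇑(Tuple.sort x)⁻¹) S).card = (k : ℕ) + 1 := by
    rw [Finset.card_image_of_injective _ (Tuple.sort x)⁻¹.injective, hS.2]
  have := min_sum_le (x ∘ Tuple.sort x) (Tuple.monotone_sort x) k _ hcard
  calc ∑ j ∈ Finset.Iic k, x (Tuple.sort x j)
      ≤ ∑ a ∈ Finset.image (⇑(Tuple.sort x)⁻¹) S, (x ∘ Tuple.sort x) a := this
    _ = ∑ a ∈ S, x a := by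
        rw [Finset.sum_image (fun a _ b _ h => (Tuple.sort x)⁻¹.injective h)]
        exact Finset.sum_congr rfl (fun a _ => by simp)

/-- The difference sequence of an antitone `Fin n`-tuple (padded with 0). -/
def dstep {n : ℕ} (iD : Fin n → ℕ) (k : Fin n) : ℕ :=
  iD k - (if h : (k : ℕ) + 1 < n then iD ⟨(k : ℕ) + 1, h⟩ else 0)

lemma abel_fin {n : ℕ} (iD : Fin n → ℕ) (anti : Antitone iD) (y : Fin n → ℝ) :
    ∑ k : Fin n, (dstep iD k : ℝ) * ∑ j ∈ Finset.Iic k, y j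
      = ∑ j : Fin n, (iD j : ℝ) * y j := by
  set g : ℕ → ℝ := fun kn => if h : kn < n then (iD ⟨kn, h⟩ : ℝ) else 0 with hg
  have hgn : g n = 0 := by simp [hg]
  have hterm : ∀ k : Fin n, (dstep iD k : ℝ) = g k - g ((k : ℕ) + 1) := by
    intro k
    have hk : g (k : ℕ) = (iD k : ℝ) := by simp [hg, k.isLt]
    by_cases h : (k : ℕ) + 1 < n
    · have hle : iD ⟨(k : ℕ) + 1, h⟩ ≤ iD k := anti (by simp [Fin.le_def])
      simp [dstep, h, hk, Nat.cast_sub hle, hg]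
    · simp [dstep, h, hk, hg]
  calc ∑ k : Fin n, (dstep iD k : ℝ) * ∑ j ∈ Finset.Iic k, y j
      = ∑ kn ∈ range n, (g kn - g (kn + 1)) * ∑ j ∈ range (kn + 1), extz y j := by
        rw [← Fin.sum_univ_eq_sum_range
          (fun kn => (g kn - g (kn + 1)) * ∑ j ∈ range (kn + 1), extz y j) n]
        exact Finset.sum_congr rfl (fun k _ => by rw [hterm k, sum_Iic_extz])
    _ = (∑ j ∈ range n, g j * extz y j) - g n * ∑ j ∈ range n, extz y j :=
        abel_aux g (extz y) n
    _ = ∑ j ∈ range n, g j * extz y j := by rw [hgn]; ring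
    _ = ∑ j : Fin n, (iD j : ℝ) * y j := by
        rw [← Fin.sum_univ_eq_sum_range (fun j => g j * extz y j) n]
        exact Finset.sum_congr rfl (fun j _ => by simp [hg, extz, j.isLt])

/-- Every symmetrized tropical monomial with nonnegative exponents is a
tropical polynomial (with nonnegative exponents) in e₁,…,eₙ. -/
theorem sym_monomial_in_elementary {n : ℕ} (i : Fin n → ℕ) :
    ∃ (N : ℕ) (hN : 0 < N) (c : Fin N → ℝ) (m : Fin N → Fin n → ℕ),
      ∀ x : Fin n → ℝ,
        (Finset.univ : Finset (Fin N)).inf'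
            (Finset.univ_nonempty_iff.mpr (Fin.pos_iff_nonempty.mp hN))
            (fun t => c t + ∑ k : Fin n, (m t k : ℝ) * tropE' k x)
        = tropSym (fun y => ∑ j : Fin n, (i j : ℝ) * y j) x := by
  classical
  set μ : Equiv.Perm (Fin n) := Fin.revPerm.trans (Tuple.sort i) with hμ
  set iD : Fin n → ℕ := fun j => i (μ j) with hiD
  have anti : Antitone iD := by
    intro a b hab
    exact Tuple.monotone_sort i (Fin.rev_le_rev.mpr hab)
  refine ⟨1, one_pos, fun _ => 0, fun _ => dstep iD, fun x => ?_⟩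
  have hLHS : (Finset.univ : Finset (Fin 1)).inf'
      (Finset.univ_nonempty_iff.mpr (Fin.pos_iff_nonempty.mp one_pos))
      (fun t => (0 : ℝ) + ∑ k : Fin n, (dstep iD k : ℝ) * tropE' k x)
      = ∑ k : Fin n, (dstep iD k : ℝ) * tropE' k x := by
    rw [Finset.inf'_const]; ring
  rw [hLHS]
  set A := ∑ k : Fin n, (dstep iD k : ℝ) * tropE' k x with hA
  have key : ∀ φ : Equiv.Perm (Fin n),
      ∑ k : Fin n, (dstep iD k : ℝ) * ∑ j ∈ Finset.Iic k, x (φ (μ j))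
        = ∑ j : Fin n, (i j : ℝ) * x (φ j) := by
    intro φ
    rw [abel_fin iD anti (fun j => x (φ (μ j)))]
    exact Equiv.sum_comp μ (fun j => (i j : ℝ) * x (φ j))
  refine le_antisymm ?_ ?_
  · -- A ≤ each term of the min
    refine Finset.le_inf' _ _ (fun π _ => ?_)
    have hterm : A ≤ ∑ k : Fin n, (dstep iD k : ℝ) * ∑ j ∈ Finset.Iic k, x (π (μ j)) := by
      refine Finset.sum_le_sum (fun k _ => ?_)
      exact mul_le_mul_of_nonneg_left
        (tropE'_le x k (π ∘ μ) ((π.injective).comp μ.injective))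
        (Nat.cast_nonneg _)
    calc A ≤ _ := hterm
      _ = ∑ j : Fin n, (i j : ℝ) * x (π j) := key π
      _ = ∑ j : Fin n, (i j : ℝ) * (x ∘ π) j := rfl
  · -- the min is ≤ A:  witness permutation
    set π : Equiv.Perm (Fin n) := μ.symm.trans (Tuple.sort x) with hπ
    have hπμ : ∀ j : Fin n, π (μ j) = Tuple.sort x j := by
      intro j; simp [hπ]
    have hval : ∑ j : Fin n, (i j : ℝ) * (x ∘ π) j = A := by
      have hcomp : ∑ j : Fin n, (i j : ℝ) * (x ∘ π) j
          = ∑ j : Fin n, (i j : ℝ) * x (π j) := rfl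
      rw [hcomp, ← key π, hA]
      refine Finset.sum_congr rfl (fun k _ => ?_)
      rw [tropE'_eq_sorted x k]
      congr 1
      exact Finset.sum_congr rfl (fun j _ => by rw [hπμ j])
    calc tropSym (fun y => ∑ j : Fin n, (i j : ℝ) * y j) x
        ≤ ∑ j : Fin n, (i j : ℝ) * (x ∘ π) j := Finset.inf'_le _ (Finset.mem_univ π)
      _ = A := hval
end

section
/- If a symmetric tropical rational function r equals p − q pointwise on ℝⁿ, where p and q are tropical polynomial functions (finite minima of affine functions), then r = Sym(p) − Sym(q) pointwise, where Sym(f)(x) = min_{π∈Sₙ} f(x∘π). -/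
/-- If a symmetric tropical rational function r equals p − q pointwise,
then r = Sym(p) − Sym(q) pointwise. -/
theorem symmetric_rational_sym {n : ℕ} (r p q : (Fin n → ℝ) → ℝ)
    (hsym : ∀ (π : Equiv.Perm (Fin n)) (x : Fin n → ℝ), r (x ∘ π) = r x)
    (hr : ∀ x, r x = p x - q x) :
    ∀ x, r x = tropSym p x - tropSym q x := by
  intro x
  have key : ∀ π : Equiv.Perm (Fin n), p (x ∘ π) = r x + q (x ∘ π) := by
    intro π
    have h1 := hr (x ∘ π)
    have h2 := hsym π x
    linarith
  have : tropSym p x = r x + tropSym q x := by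
    simp only [tropSym]
    rw [Finset.inf'_congr Finset.univ_nonempty rfl (fun π _ => key π)]
    exact (map_finset_inf' (OrderIso.addLeft (r x)) Finset.univ_nonempty
      (fun π : Equiv.Perm (Fin n) => q (x ∘ π))).symm
  linarith [this]
end
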